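/- Let P^⊥ and Q^⊥ be the linear cellular automaton shifts determined by Φ and Ψ respectively, and suppose S(Φ) ⊆ S(Ψ). Then every topological homomorphism φ : P^⊥ → Q^⊥ is additive: φ(x + y) = φ(x) + φ(y) for all x, y ∈ P^⊥. -/

import Mathlib

open MeasureTheory Filter Topology

namespace LCA

/-- The full shift `𝔽_p^{ℤ^d}`. -/
abbrev Full (p d : ℕ) : Type := (Fin d → ℤ) → ZMod p

/-- The shift action: `(σ_g x)(n) = x(n+g)`. -/
def shift (p d : ℕ) (g : Fin d → ℤ) (x : Full p d) : Full p d := fun n => x (n + g)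

/-- `e_d = (0,…,0,1)`, the exponent of the "time" variable `X_d`. -/
def eLast (d : ℕ) : Fin d → ℤ := fun i => if (i : ℕ) = d - 1 then 1 else 0

/-- The linear cellular automaton shift `P^⊥` for `P = X_d − Φ`, as a set:
all `x` with `x(n+e_d) = Σ_{m ∈ S(Φ)} Φ(m)·x(n+m)` for every `n`. -/
def Pperp (p d : ℕ) (Φ : (Fin d → ℤ) →₀ ZMod p) : Set (Full p d) :=
  {x | ∀ n : Fin d → ℤ, x (n + eLast d) = ∑ m ∈ Φ.support, Φ m * x (n + m)}

/-- `P^⊥` as a closed, shift-invariant subgroup of the full shift. -/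
def PperpGroup (p d : ℕ) (Φ : (Fin d → ℤ) →₀ ZMod p) : AddSubgroup (Full p d) where
  carrier := Pperp p d Φ
  zero_mem' := by intro n; simp
  add_mem' := by
    intro x y hx hy n
    simp only [Pi.add_apply, hx n, hy n, mul_add, Finset.sum_add_distrib]
  neg_mem' := by
    intro x hx n
    simp only [Pi.neg_apply, hx n, mul_neg, Finset.sum_neg_distrib, neg_inj]

lemma shift_mem_Pperp (p d : ℕ) (Φ : (Fin d → ℤ) →₀ ZMod p) (g : Fin d → ℤ)
    {x : Full p d} (hx : x ∈ Pperp p d Φ) : shift p d g x ∈ Pperp p d Φ := by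
  intro n
  simpa [shift, add_right_comm] using hx (n + g)

/-- The shift action restricted to `P^⊥`. -/
def shiftSub (p d : ℕ) (Φ : (Fin d → ℤ) →₀ ZMod p) (g : Fin d → ℤ)
    (x : PperpGroup p d Φ) : PperpGroup p d Φ :=
  ⟨shift p d g x.1, shift_mem_Pperp p d Φ g x.2⟩

end LCA

/-!
Continuity of `φ` on the compact group `P^⊥` makes `x ↦ φ(x)(0)` a function of `x` on a finite
window `V`. In characteristic `p` the defining relation of `P^⊥` iterates to
`x(n + p^k e_d) = Σ_m Φ(m) x(n + p^k m)`. Multiplication by `Φ` is onto `𝔽_p^{ℤ^d}`, so an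
element of `P^⊥` may take arbitrary values on a hyperplane `{n_d = c}`; hence for `k` large,
elements of `P^⊥` can be prescribed on the far-apart windows `V + p^k m`, `m ∈ S(Ψ)`, by a single
`x ∈ P^⊥`. Comparing the relation for `x` with the relation for `φ(x) ∈ Q^⊥` then gives
`φ(Σ_m Φ(m) y_m)(0) = Σ_m Ψ(m) φ(y_m)(0)` for every family `y` in `P^⊥`. Two distinct monomials
of `Φ` turn this into additivity of `φ(·)(0)`, and equivariance spreads it to every coordinate.
-/

lemma Module.End.pow_apply_eq_of_commute {R M : Type*} [Semiring R] [AddCommMonoid M]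
    [Module R M] {f g : Module.End R M} (hfg : Commute f g) {x : M} (hx : f x = g x) (j : ℕ) :
    (f ^ j) x = (g ^ j) x := by
  induction j with
  | zero => rfl
  | succ j ih =>
    rw [pow_succ, Module.End.mul_apply, hx, ← Module.End.mul_apply, (hfg.pow_left j).eq,
      Module.End.mul_apply, ih, ← Module.End.mul_apply, ← pow_succ']

lemma Function.Surjective.exists_int_orbit {α : Type*} {f : α → α} (hf : f.Surjective) (a : α) :
    ∃ o : ℤ → α, o 0 = a ∧ ∀ t, o (t + 1) = f (o t) := by
  refine ⟨fun t => if 0 ≤ t then f^[t.toNat] a else (Function.surjInv hf)^[(-t).toNat] a,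
    by simp, fun t => ?_⟩
  rcases lt_trichotomy t (-1) with ht | rfl | ht
  · simp only [if_neg (by omega : ¬ 0 ≤ t), if_neg (by omega : ¬ 0 ≤ t + 1)]
    rw [show (-t).toNat = (-(t + 1)).toNat + 1 by omega, Function.iterate_succ_apply',
      Function.surjInv_eq hf]
  · simp [Function.surjInv_eq]
  · simp only [if_pos (by omega : 0 ≤ t), if_pos (by omega : 0 ≤ t + 1)]
    rw [show (t + 1).toNat = t.toNat + 1 by omega, Function.iterate_succ_apply']

lemma AddMonoidAlgebra.coeff_support_pow_subset {R G : Type*} [Semiring R] [AddMonoid G]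
    (H : AddSubmonoid G) {a : AddMonoidAlgebra R G} (ha : ∀ m ∈ a.coeff.support, m ∈ H) (j : ℕ) :
    ∀ m ∈ (a ^ j).coeff.support, m ∈ H := by
  classical
  induction j with
  | zero =>
    intro m hm
    rw [pow_zero] at hm
    obtain rfl : m = 0 := by simpa using support_coeff_one_subset hm
    exact H.zero_mem
  | succ j ih =>
    intro m hm
    obtain ⟨b, hb, c, hc, rfl⟩ :=
      Finset.mem_add.mp (support_coeff_mul_subset _ _ (pow_succ a j ▸ hm))
    exact H.add_mem (ih b hb) (ha c hc)

open Pointwise in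
lemma eventually_eq_of_add_nsmul_eq_add_nsmul {A : Type*} [AddCommGroup A] [IsAddTorsionFree A]
    (G S : Finset A) : ∀ᶠ N : ℕ in atTop,
      ∀ m ∈ S, ∀ m' ∈ S, ∀ g ∈ G, ∀ g' ∈ G, g + N • m = g' + N • m' → m = m' := by
  classical
  refine (eventually_all_finset S).2 fun m _ => (eventually_all_finset S).2 fun m' _ => ?_
  rcases eq_or_ne m m' with h | h
  · exact .of_forall fun _ _ _ _ _ _ => h
  have hinj : Function.Injective fun N : ℕ => N • (m - m') := fun N N' hN =>
    Nat.cast_injective (smul_left_injective ℤ (sub_ne_zero.mpr h) (by simpa using hN))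
  filter_upwards [Nat.cofinite_eq_atTop ▸ hinj.tendsto_cofinite.eventually
    (G - G).finite_toSet.eventually_cofinite_notMem] with N hN g hg g' hg' heq
  have hdiff : N • m - N • m' = g' - g := sub_eq_sub_iff_add_eq_add.mpr (by rw [add_comm, heq])
  rw [smul_sub, hdiff] at hN
  exact absurd (Finset.sub_mem_sub hg' hg) hN

lemma exists_finset_forall_apply_eq_imp_eq {X Y ι : Type*} {Z : ι → Type*} [TopologicalSpace X]
    [CompactSpace X] [TopologicalSpace Y] [DiscreteTopology Y] [∀ i, TopologicalSpace (Z i)]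
    [∀ i, T2Space (Z i)] {c : X → ∀ i, Z i} (hc : Continuous c) (hinj : Function.Injective c)
    {f : X → Y} (hf : Continuous f) :
    ∃ V : Finset ι, ∀ x y, (∀ i ∈ V, c x i = c y i) → f x = f y := by
  -- the pairs separated by `f` form a compact set, covered by the open sets `{c x i ≠ c y i}`
  have hD : IsCompact {q : X × X | f q.1 ≠ f q.2} :=
    ((isOpen_discrete {q : Y × Y | q.1 = q.2}).preimage (hf.prodMap hf)).isClosed_compl.isCompact
  obtain ⟨V, hV⟩ := hD.elim_finite_subcover (fun i => {q : X × X | c q.1 i ≠ c q.2 i})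
    (fun i => isOpen_ne_fun ((continuous_apply i).comp (hc.comp continuous_fst))
      ((continuous_apply i).comp (hc.comp continuous_snd)))
    fun q hq => Set.mem_iUnion.mpr (Function.ne_iff.mp (hinj.ne (ne_of_apply_ne f hq)))
  refine ⟨V, fun x y hxy => by_contra fun hne => ?_⟩
  obtain ⟨i, hi, hne'⟩ :=
    Set.mem_iUnion₂.mp (hV (show (x, y) ∈ {q : X × X | f q.1 ≠ f q.2} from hne))
  exact hne' (hxy i hi)

namespace LCA

open AddMonoidAlgebra

variable {p d : ℕ} {Φ : (Fin d → ℤ) →₀ ZMod p}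

noncomputable def shiftHom : Multiplicative (Fin d → ℤ) →* Module.End (ZMod p) (Full p d) where
  toFun g := LinearMap.funLeft (ZMod p) (ZMod p) (· + g.toAdd)
  map_one' := by ext x n; simp
  map_mul' g h := by
    ext x n
    simp only [Module.End.mul_apply, LinearMap.funLeft_apply, toAdd_mul]
    congr 1
    abel

lemma shiftHom_apply (g : Multiplicative (Fin d → ℤ)) (x : Full p d) :
    shiftHom g x = shift p d g.toAdd x := rfl

/-- `Full p d` as a module over the group ring `𝔽_p[ℤ^d]`, the monomial `X^m` acting as `σ_m`. -/
noncomputable def act :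
    AddMonoidAlgebra (ZMod p) (Fin d → ℤ) →ₐ[ZMod p] Module.End (ZMod p) (Full p d) :=
  lift (ZMod p) _ (Fin d → ℤ) shiftHom

lemma act_apply (a : AddMonoidAlgebra (ZMod p) (Fin d → ℤ)) (x : Full p d) (n : Fin d → ℤ) :
    act a x n = ∑ m ∈ a.coeff.support, a.coeff m * x (n + m) := by
  simp [act, lift_apply, Finsupp.sum, shiftHom_apply, shift]

lemma act_single (g : Fin d → ℤ) (c : ZMod p) (x : Full p d) :
    act (single g c) x = c • shift p d g x := by
  rw [act, lift_single, LinearMap.smul_apply, shiftHom_apply, toAdd_ofAdd]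

lemma act_apply_piSingle (a : AddMonoidAlgebra (ZMod p) (Fin d → ℤ)) (q : Fin d → ℤ)
    (c : ZMod p) (n : Fin d → ℤ) : act a (Pi.single q c) n = a.coeff (q - n) * c := by
  classical
  rw [act_apply, Finset.sum_eq_single (q - n)]
  · simp
  · intro m _ hm
    rw [Pi.single_apply, if_neg (by rintro rfl; simp at hm), mul_zero]
  · intro h
    rw [Finsupp.notMem_support_iff.mp h, zero_mul]

lemma mem_Pperp_iff_act {x : Full p d} :
    x ∈ Pperp p d Φ ↔ act (single (eLast d) 1) x = act (ofCoeff Φ) x := by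
  rw [act_single, one_smul, funext_iff]
  exact forall_congr' fun n => by rw [act_apply]; rfl

lemma shift_nsmul_eLast {x : Full p d} (hx : x ∈ Pperp p d Φ) (j : ℕ) :
    shift p d (j • eLast d) x = act (ofCoeff Φ ^ j) x := by
  have hcomm : Commute (act (single (eLast d) (1 : ZMod p))) (act (ofCoeff Φ)) :=
    (Commute.all _ _).map act
  rw [← one_smul (ZMod p) (shift p d _ x), ← act_single, ← one_pow j, ← single_pow, map_pow,
    map_pow, Module.End.pow_apply_eq_of_commute hcomm (mem_Pperp_iff_act.mp hx)]

lemma apply_add_nsmul_eLast {x : Full p d} (hx : x ∈ Pperp p d Φ) (j : ℕ) (n : Fin d → ℤ) :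
    x (n + j • eLast d) =
      ∑ c ∈ (ofCoeff Φ ^ j).coeff.support, (ofCoeff Φ ^ j).coeff c * x (n + c) := by
  rw [← act_apply, ← shift_nsmul_eLast hx]
  rfl

lemma ofCoeff_pow_char_pow [Fact p.Prime] (Φ : (Fin d → ℤ) →₀ ZMod p) (k : ℕ) :
    ofCoeff Φ ^ p ^ k = ∑ m ∈ Φ.support, single (p ^ k • m) (Φ m) := by
  have : CharP (AddMonoidAlgebra (ZMod p) (Fin d → ℤ)) p :=
    charP_of_injective_algebraMap' (ZMod p) p
  conv_lhs => rw [← sum_coeff_single (ofCoeff Φ)]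
  rw [Finsupp.sum, sum_pow_char_pow]
  exact Finset.sum_congr rfl fun m _ => by rw [single_pow, ZMod.pow_card_pow]

lemma apply_add_pow_smul_eLast [Fact p.Prime] {x : Full p d} (hx : x ∈ Pperp p d Φ) (k : ℕ)
    (n : Fin d → ℤ) : x (n + p ^ k • eLast d) = ∑ m ∈ Φ.support, Φ m * x (n + p ^ k • m) := by
  have := congr_fun (shift_nsmul_eLast hx (p ^ k)) n
  rw [ofCoeff_pow_char_pow, map_sum, LinearMap.sum_apply, Finset.sum_apply] at this
  simpa only [act_single, Finset.sum_apply, Pi.smul_apply, smul_eq_mul, shift] using this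

lemma exists_act_eqOn [Fact p.Prime] (hΦ : Φ ≠ 0) (ζ : Full p d) (F : Finset (Fin d → ℤ)) :
    ∃ ξ : Full p d, ∀ n ∈ F, act (ofCoeff Φ) ξ n = ζ n := by
  classical
  obtain ⟨mₘ, hmₘ, hmax⟩ :=
    Φ.support.exists_max_image toLex (Finsupp.support_nonempty_iff.mpr hΦ)
  refine Finset.induction_on_max_value toLex F ⟨0, by simp⟩ fun n₁ F hn₁ hF ⟨ξ, hξ⟩ => ?_
  set c := (Φ mₘ)⁻¹ * (ζ n₁ - act (ofCoeff Φ) ξ n₁)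
  refine ⟨ξ + Pi.single (n₁ + mₘ) c, fun n hn => ?_⟩
  rw [map_add, Pi.add_apply, act_apply_piSingle, coeff_ofCoeff]
  rcases Finset.mem_insert.mp hn with rfl | hn
  · rw [add_sub_cancel_left, mul_inv_cancel_left₀ (Finsupp.mem_support_iff.mp hmₘ)]
    ring
  · -- `n` is lex-smaller than `n₁`, so it cannot reach `n₁ + mₘ` through the support of `Φ`
    suffices Φ (n₁ + mₘ - n) = 0 by rw [this, zero_mul, add_zero, hξ n hn]
    by_contra hm
    have hlt : toLex n + toLex (n₁ + mₘ - n) < toLex n₁ + toLex mₘ :=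
      add_lt_add_of_lt_of_le ((hF n hn).lt_of_ne (by rintro ⟨⟩; exact hn₁ hn))
        (hmax _ (Finsupp.mem_support_iff.mpr hm))
    rw [← toLex_add, ← toLex_add, add_sub_cancel] at hlt
    exact hlt.false

lemma act_surjective [Fact p.Prime] (hΦ : Φ ≠ 0) :
    Function.Surjective (act (ofCoeff Φ) : Full p d → Full p d) := by
  have hcont : Continuous (act (ofCoeff Φ) : Full p d → Full p d) :=
    continuous_pi fun n => by simp_rw [act_apply]; fun_prop
  intro ζ
  rw [← Set.mem_range, ← (isCompact_range hcont).isClosed.closure_eq, mem_closure_iff]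
  intro U hU hζ
  obtain ⟨F, V, hV, hFV⟩ := isOpen_pi_iff.mp hU ζ hζ
  obtain ⟨ξ, hξ⟩ := exists_act_eqOn hΦ ζ F
  exact ⟨_, hFV fun n hn => by rw [hξ n hn]; exact (hV n hn).2, ξ, rfl⟩

lemma exists_mem_Pperp_eqOn_hyperplane {i : Fin d} (hi : (i : ℕ) = d - 1)
    (hΦi : ∀ m ∈ Φ.support, m i = 0)
    (hsurj : Function.Surjective (act (ofCoeff Φ) : Full p d → Full p d)) (ξ : Full p d) (c : ℤ) :
    ∃ x ∈ Pperp p d Φ, ∀ n, n i = c → x n = ξ n := by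
  obtain ⟨o, ho0, ho⟩ := hsurj.exists_int_orbit ξ
  -- on the hyperplane at height `c + t`, translated down to height `c`, the point is `o t`
  refine ⟨fun n => o (n i - c) (n - (n i - c) • eLast d), fun n => ?_,
    fun n hn => by simp [hn, ho0]⟩
  have he : eLast d i = 1 := by simp [eLast, hi]
  simp only [Pi.add_apply, he]
  rw [show n i + 1 - c = (n i - c) + 1 by ring, ho, act_apply, coeff_ofCoeff]
  refine Finset.sum_congr rfl fun m hm => ?_
  rw [hΦi m hm, add_zero, add_smul, one_smul]
  congr 2
  abel

lemma eventually_exists_mem_Pperp_eqOn [Fact p.Prime] {i : Fin d} (hi : (i : ℕ) = d - 1)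
    (hΦi : ∀ m ∈ Φ.support, m i = 0) (hΦ : Φ ≠ 0) (T S : Finset (Fin d → ℤ))
    (hSi : ∀ m ∈ S, m i = 0) :
    ∀ᶠ N : ℕ in atTop, ∀ z : (Fin d → ℤ) → Full p d, (∀ m ∈ S, z m ∈ Pperp p d Φ) →
      ∃ x ∈ Pperp p d Φ, ∀ m ∈ S, ∀ n ∈ T, x (n + N • m) = z m (n + N • m) := by
  classical
  obtain ⟨r, hr⟩ := (T.image (· i)).bddBelow
  set j : (Fin d → ℤ) → ℕ := fun n => (n i - r).toNat
  -- by `apply_add_nsmul_eLast`, an `x ∈ P^⊥` is determined on `T` by its values on `G`,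
  -- a subset of the hyperplane `{n i = r}`
  set G := T.biUnion fun n => (ofCoeff Φ ^ j n).coeff.support.image (n - j n • eLast d + ·)
  filter_upwards [eventually_eq_of_add_nsmul_eq_add_nsmul G S] with N hN z hz
  set ξ : Full p d := fun n' => ∑ m ∈ S, if n' - N • m ∈ G then z m n' else 0
  have hξ : ∀ m ∈ S, ∀ g ∈ G, ξ (g + N • m) = z m (g + N • m) := by
    intro m hm g hg
    simp only [ξ]
    rw [Finset.sum_eq_single m (fun m' hm' hne => if_neg fun h => hne
      (hN m' hm' m hm _ h g hg (sub_add_cancel _ _))) (absurd hm), add_sub_cancel_right,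
      if_pos hg]
  obtain ⟨x, hx, hxξ⟩ := exists_mem_Pperp_eqOn_hyperplane hi hΦi (act_surjective hΦ) ξ r
  refine ⟨x, hx, fun m hm n hn => ?_⟩
  have hj : (j n : ℤ) = n i - r :=
    Int.toNat_of_nonneg (sub_nonneg.mpr (hr (Finset.mem_image_of_mem _ hn)))
  have hcone : ∀ c ∈ (ofCoeff Φ ^ j n).coeff.support, c i = 0 :=
    coeff_support_pow_subset (AddMonoidHom.mker (Pi.evalAddMonoidHom (fun _ => ℤ) i)) hΦi (j n)
  rw [show n + N • m = (n + N • m - j n • eLast d) + j n • eLast d by abel,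
    apply_add_nsmul_eLast hx, apply_add_nsmul_eLast (hz m hm)]
  refine Finset.sum_congr rfl fun c hc => ?_
  have hg : n - j n • eLast d + c ∈ G :=
    Finset.mem_biUnion.mpr ⟨n, hn, Finset.mem_image_of_mem _ hc⟩
  have hlevel : (n + N • m - j n • eLast d + c) i = r := by
    simp [hSi m hm, hcone c hc, eLast, hi, hj]
  rw [hxξ _ hlevel, show n + N • m - j n • eLast d + c = (n - j n • eLast d + c) + N • m by abel,
    hξ m hm _ hg]

lemma isClosed_Pperp : IsClosed (Pperp p d Φ) := by
  simp only [Pperp, Set.ofPred_forall]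
  exact isClosed_iInter fun n => isClosed_eq (by fun_prop) (by fun_prop)

instance [NeZero p] : CompactSpace (PperpGroup p d Φ) :=
  isCompact_iff_compactSpace.mp isClosed_Pperp.isCompact

lemma shiftSub_add (g : Fin d → ℤ) (x y : PperpGroup p d Φ) :
    shiftSub p d Φ g (x + y) = shiftSub p d Φ g x + shiftSub p d Φ g y := rfl

section Homomorphism

variable {Ψ : (Fin d → ℤ) →₀ ZMod p} {φ : PperpGroup p d Φ → PperpGroup p d Ψ}

lemma apply_eq_apply_shiftSub_zero
    (hequiv : ∀ g x, φ (shiftSub p d Φ g x) = shiftSub p d Ψ g (φ x)) (x : PperpGroup p d Φ)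
    (g : Fin d → ℤ) : (φ x : Full p d) g = (φ (shiftSub p d Φ g x) : Full p d) 0 := by
  rw [hequiv]
  simp [shiftSub, shift]

lemma map_add_of_apply_zero_add
    (hequiv : ∀ g x, φ (shiftSub p d Φ g x) = shiftSub p d Ψ g (φ x))
    (hadd : ∀ x y, (φ (x + y) : Full p d) 0 = (φ x : Full p d) 0 + (φ y : Full p d) 0)
    (x y : PperpGroup p d Φ) : φ (x + y) = φ x + φ y := by
  ext g
  simp only [AddSubgroup.coe_add, Pi.add_apply, apply_eq_apply_shiftSub_zero hequiv _ g,
    shiftSub_add, hadd]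

lemma apply_zero_eq_sum [Fact p.Prime] {i : Fin d} (hi : (i : ℕ) = d - 1)
    (hΦi : ∀ m ∈ Φ.support, m i = 0) (hΨi : ∀ m ∈ Ψ.support, m i = 0) (hΦ : Φ ≠ 0)
    (hsub : Φ.support ⊆ Ψ.support) (hφ0 : φ 0 = 0)
    (hequiv : ∀ g x, φ (shiftSub p d Φ g x) = shiftSub p d Ψ g (φ x)) {V : Finset (Fin d → ℤ)}
    (hV : ∀ x y : PperpGroup p d Φ, (∀ n ∈ V, (x : Full p d) n = (y : Full p d) n) →
      (φ x : Full p d) 0 = (φ y : Full p d) 0)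
    (y : (Fin d → ℤ) → PperpGroup p d Φ) (u : PperpGroup p d Φ)
    (hu : (u : Full p d) = ∑ m ∈ Φ.support, Φ m • (y m : Full p d)) :
    (φ u : Full p d) 0 = ∑ m ∈ Φ.support, Ψ m * (φ (y m) : Full p d) 0 := by
  classical
  obtain ⟨k, hk⟩ := ((tendsto_pow_atTop_atTop_of_one_lt (Fact.out : p.Prime).one_lt).eventually
    (eventually_exists_mem_Pperp_eqOn hi hΦi hΦ V Ψ.support hΨi)).exists
  -- plant `y m` around `p ^ k • m` for `m ∈ S(Φ)`, and `0` around the other points of `S(Ψ)`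
  obtain ⟨x, hx, hxz⟩ := hk (fun m => if m ∈ Φ.support then shift p d (-(p ^ k • m)) (y m) else 0)
    fun m _ => by
      split_ifs
      exacts [shift_mem_Pperp p d Φ _ (y m).2, (PperpGroup p d Φ).zero_mem]
  set X : PperpGroup p d Φ := ⟨x, hx⟩
  have hXm : ∀ m ∈ Ψ.support, (φ (shiftSub p d Φ (p ^ k • m) X) : Full p d) 0 =
      if m ∈ Φ.support then (φ (y m) : Full p d) 0 else 0 := by
    intro m hm
    split_ifs with hmΦ
    · refine hV _ _ fun n hn => ?_
      show x (n + p ^ k • m) = _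
      rw [hxz m hm n hn, if_pos hmΦ, shift, add_neg_cancel_right]
    · rw [show (0 : ZMod p) = (φ 0 : Full p d) 0 by simp [hφ0]]
      refine hV _ _ fun n hn => ?_
      show x (n + p ^ k • m) = 0
      rw [hxz m hm n hn, if_neg hmΦ]
      rfl
  have hXe : (φ u : Full p d) 0 = (φ X : Full p d) (0 + p ^ k • eLast d) := by
    rw [zero_add, apply_eq_apply_shiftSub_zero hequiv X]
    refine hV _ _ fun n hn => ?_
    show (u : Full p d) n = x (n + p ^ k • eLast d)
    rw [hu, apply_add_pow_smul_eLast hx, Finset.sum_apply]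
    refine Finset.sum_congr rfl fun m hm => ?_
    rw [hxz m (hsub hm) n hn, if_pos hm, shift, add_neg_cancel_right]
    rfl
  rw [hXe, apply_add_pow_smul_eLast (φ X).2, ← Finset.sum_subset hsub fun m hm hmΦ => by
    rw [zero_add, apply_eq_apply_shiftSub_zero hequiv, hXm m hm, if_neg hmΦ, mul_zero]]
  refine Finset.sum_congr rfl fun m hm => ?_
  rw [zero_add, apply_eq_apply_shiftSub_zero hequiv, hXm m (hsub hm), if_pos hm]

lemma map_add_of_eq_sum [Fact p.Prime] (hΦ2 : 2 ≤ Φ.support.card)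
    {f : PperpGroup p d Φ → ZMod p} (hf0 : f 0 = 0)
    (hf : ∀ (y : (Fin d → ℤ) → PperpGroup p d Φ) (u : PperpGroup p d Φ),
      (u : Full p d) = ∑ m ∈ Φ.support, Φ m • (y m : Full p d) →
        f u = ∑ m ∈ Φ.support, Ψ m * f (y m))
    (x y : PperpGroup p d Φ) : f (x + y) = f x + f y := by
  classical
  obtain ⟨m₀, hm₀, m₁, hm₁, hne⟩ := Finset.one_lt_card.mp hΦ2
  have hpair : ∀ a b u : PperpGroup p d Φ,
      (u : Full p d) = Φ m₀ • (a : Full p d) + Φ m₁ • (b : Full p d) →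
        f u = Ψ m₀ * f a + Ψ m₁ * f b := by
    intro a b u hu
    let y : (Fin d → ℤ) → PperpGroup p d Φ :=
      fun m => if m = m₀ then a else if m = m₁ then b else 0
    rw [hf y u ?_, Finset.sum_eq_add_of_mem m₀ m₁ hm₀ hm₁ hne fun m _ hm => by simp [y, hm, hf0]]
    · simp [y, hne.symm]
    · rw [hu, Finset.sum_eq_add_of_mem m₀ m₁ hm₀ hm₁ hne fun m _ hm => by simp [y, hm]]
      simp [y, hne.symm]
  let scale (c : ZMod p) (a : PperpGroup p d Φ) : PperpGroup p d Φ :=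
    ⟨c • (a : Full p d), (AddSubgroup.toZModSubmodule p (PperpGroup p d Φ)).smul_mem c a.2⟩
  set a := scale (Φ m₀)⁻¹ x
  set b := scale (Φ m₁)⁻¹ y
  have ha : Φ m₀ • (a : Full p d) = x := smul_inv_smul₀ (Finsupp.mem_support_iff.mp hm₀) _
  have hb : Φ m₁ • (b : Full p d) = y := smul_inv_smul₀ (Finsupp.mem_support_iff.mp hm₁) _
  rw [hpair a b (x + y) (by rw [ha, hb]; rfl), hpair a 0 x (by simp [ha]),
    hpair 0 b y (by simp [hb]), hf0]
  ring

end Homomorphism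

end LCA

open LCA

/-- If `S(Φ) ⊆ S(Ψ)` then every topological homomorphism
`φ : P^⊥ → Q^⊥` is additive. -/
theorem hom_additive_of_subset (p d : ℕ) [Fact p.Prime] (hd : 2 ≤ d)
    (Φ Ψ : (Fin d → ℤ) →₀ ZMod p)
    (hΦsupp : ∀ m ∈ Φ.support, m ⟨d - 1, by omega⟩ = 0)
    (hΨsupp : ∀ m ∈ Ψ.support, m ⟨d - 1, by omega⟩ = 0)
    (hΦ2 : 2 ≤ Φ.support.card)
    (hsub : Φ.support ⊆ Ψ.support)
    (φ : PperpGroup p d Φ → PperpGroup p d Ψ)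
    (hcont : Continuous φ) (h0 : φ 0 = 0)
    (hequiv : ∀ (g : Fin d → ℤ) (x : PperpGroup p d Φ),
      φ (shiftSub p d Φ g x) = shiftSub p d Ψ g (φ x)) :
    ∀ x y : PperpGroup p d Φ, φ (x + y) = φ x + φ y := by
  have hΦ : Φ ≠ 0 := by
    rintro rfl
    simp at hΦ2
  obtain ⟨V, hV⟩ := exists_finset_forall_apply_eq_imp_eq continuous_subtype_val
    Subtype.val_injective ((continuous_apply 0).comp (continuous_subtype_val.comp hcont))
  exact map_add_of_apply_zero_add hequiv <| map_add_of_eq_sum hΦ2 (by simp [h0])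
    (apply_zero_eq_sum rfl hΦsupp hΨsupp hΦ hsub h0 hequiv hV)
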